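/- Let t₁, t₂ be positive integers and n ≥ 0 an integer. Let h ∈ ℂ[x,y] be quasi-homogeneous of type t = (t₁,t₂) and degree n + t₁ + t₂, let μ ∈ ℂ[x,y] be quasi-homogeneous of type t and degree n, and set F_n := X_h + μ·D₀. If f ∈ ℂ[x,y] is irreducible, quasi-homogeneous of type t of some degree s ≥ 1, and is an invariant curve of F_n (i.e. ∇f·F_n = K·f for some polynomial K), then f divides h. -/
import Mathlib


open MvPolynomial

/-- A polynomial in two variables is quasi-homogeneous of type `(t₁,t₂)` and
degree `k` if every monomial `x^a y^b` occurring in it satisfies `t₁a + t₂b = k`. -/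
def IsQH {K : Type*} [CommSemiring K] (t₁ t₂ k : ℕ) (p : MvPolynomial (Fin 2) K) : Prop :=
  ∀ m ∈ p.support, t₁ * m 0 + t₂ * m 1 = k

/-- `∇f · (P,Q)` for a planar polynomial vector field `(P,Q)`. -/
noncomputable def gradDot {K : Type*} [CommRing K]
    (f P Q : MvPolynomial (Fin 2) K) : MvPolynomial (Fin 2) K :=
  pderiv 0 f * P + pderiv 1 f * Q

lemma X_mul_pderiv_monomial (i : Fin 2) (m : Fin 2 →₀ ℕ) (c : ℂ) :
    X i * pderiv i (monomial m c) = monomial m (c * (m i : ℂ)) := by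
  rw [pderiv_monomial]
  by_cases hmi : m i = 0
  · simp [hmi]
  · have h1 : Finsupp.single i 1 ≤ m := by
      rwa [Finsupp.single_le_iff, Nat.one_le_iff_ne_zero]
    rw [X, monomial_mul, one_mul, add_tsub_cancel_of_le h1]

/-- Euler identity for quasi-homogeneous polynomials. -/
lemma euler_QH {t₁ t₂ k : ℕ} {p : MvPolynomial (Fin 2) ℂ} (hp : IsQH t₁ t₂ k p) :
    C (t₁ : ℂ) * (X 0 * pderiv 0 p) + C (t₂ : ℂ) * (X 1 * pderiv 1 p) = C (k : ℂ) * p := by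
  conv_lhs => rw [p.as_sum]
  conv_rhs => rw [p.as_sum]
  rw [map_sum (pderiv (0 : Fin 2)) (fun v => monomial v (coeff v p)) p.support,
    map_sum (pderiv (1 : Fin 2)) (fun v => monomial v (coeff v p)) p.support
    ]
  simp only [Finset.mul_sum]
  rw [← Finset.sum_add_distrib]
  refine Finset.sum_congr rfl fun m hm => ?_
  rw [X_mul_pderiv_monomial, X_mul_pderiv_monomial, C_mul_monomial, C_mul_monomial,
    C_mul_monomial, ← map_add]
  congr 1
  have hk : (t₁ : ℂ) * (m 0 : ℂ) + (t₂ : ℂ) * (m 1 : ℂ) = (k : ℂ) := by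
    exact_mod_cast congrArg (Nat.cast : ℕ → ℂ) (hp m hm)
  linear_combination coeff m p * hk

/-- Any irreducible quasi-homogeneous invariant curve of `F_n = X_h + μ·D₀`
is a factor of `h`. -/
theorem invariant_curve_divides_hamiltonian
    (t₁ t₂ : ℕ) (ht₁ : 0 < t₁) (ht₂ : 0 < t₂) (n s : ℕ) (hs : 1 ≤ s)
    (h μ f : MvPolynomial (Fin 2) ℂ)
    (hh : IsQH t₁ t₂ (n + t₁ + t₂) h)
    (hμ : IsQH t₁ t₂ n μ)
    (hf : IsQH t₁ t₂ s f)
    (hirr : Irreducible f)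
    (hinv : ∃ K : MvPolynomial (Fin 2) ℂ,
      gradDot f (-(pderiv 1 h) + μ * (C (t₁ : ℂ) * X 0))
        (pderiv 0 h + μ * (C (t₂ : ℂ) * X 1)) = K * f) :
    f ∣ h := by
  obtain ⟨K, hK⟩ := hinv
  rw [gradDot] at hK
  have Ef := euler_QH hf
  have Eh := euler_QH hh
  have hprime : Prime f := hirr.prime
  have hf0 : f ≠ 0 := hirr.ne_zero
  set fx := pderiv 0 f with hfx
  set fy := pderiv 1 f with hfy
  set hx := pderiv 0 h with hhx
  set hy := pderiv 1 h with hhy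
  -- the Jacobian is divisible by f
  have hW : fx * hy - fy * hx = (C (s : ℂ) * μ - K) * f := by
    linear_combination -hK + μ * Ef
  have hdvdW : f ∣ fx * hy - fy * hx := ⟨C (s : ℂ) * μ - K, by rw [hW]; ring⟩
  -- key identities
  have hd : (n + t₁ + t₂ : ℕ) ≠ 0 := by positivity
  have hCd : IsUnit (C ((n + t₁ + t₂ : ℕ) : ℂ) : MvPolynomial (Fin 2) ℂ) := by
    refine IsUnit.map MvPolynomial.C ?_
    exact isUnit_iff_ne_zero.mpr (Nat.cast_ne_zero.mpr hd)
  have hid1 : C ((n + t₁ + t₂ : ℕ) : ℂ) * (h * fx) =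
      C (s : ℂ) * (f * hx) + C (t₂ : ℂ) * (X 1 * (fx * hy - fy * hx)) := by
    linear_combination hx * Ef - fx * Eh
  have hid2 : C ((n + t₁ + t₂ : ℕ) : ℂ) * (h * fy) =
      C (s : ℂ) * (f * hy) - C (t₁ : ℂ) * (X 0 * (fx * hy - fy * hx)) := by
    linear_combination hy * Ef - fy * Eh
  have hdvd1 : f ∣ h * fx := by
    have : f ∣ C ((n + t₁ + t₂ : ℕ) : ℂ) * (h * fx) := by
      rw [hid1]
      exact dvd_add (Dvd.dvd.mul_left (Dvd.dvd.mul_right dvd_rfl hx) _)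
        (Dvd.dvd.mul_left hdvdW _ |>.mul_left _)
    exact hCd.dvd_mul_left.mp this
  have hdvd2 : f ∣ h * fy := by
    have : f ∣ C ((n + t₁ + t₂ : ℕ) : ℂ) * (h * fy) := by
      rw [hid2]
      exact dvd_sub (Dvd.dvd.mul_left (Dvd.dvd.mul_right dvd_rfl hy) _)
        (Dvd.dvd.mul_left hdvdW _ |>.mul_left _)
    exact hCd.dvd_mul_left.mp this
  by_contra hndvd
  have hdfx : f ∣ fx := ((hprime.dvd_mul.mp hdvd1).resolve_left hndvd)
  have hdfy : f ∣ fy := ((hprime.dvd_mul.mp hdvd2).resolve_left hndvd)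
  obtain ⟨a, ha⟩ := hdfx
  obtain ⟨b, hb⟩ := hdfy
  have hcancel : C (t₁ : ℂ) * (X 0 * a) + C (t₂ : ℂ) * (X 1 * b) = C (s : ℂ) := by
    have hmul : (C (t₁ : ℂ) * (X 0 * a) + C (t₂ : ℂ) * (X 1 * b)) * f = C (s : ℂ) * f := by
      rw [ha, hb] at Ef
      linear_combination Ef
    exact mul_right_cancel₀ hf0 hmul
  have := congrArg constantCoeff hcancel
  simp only [map_add, map_mul, constantCoeff_C, constantCoeff_X, zero_mul, mul_zero,
    add_zero] at this
  have hs0 : (s : ℂ) = 0 := this.symm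
  exact absurd (Nat.cast_eq_zero.mp hs0) (by omega)
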